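/- Let P = w·x⁴ + w·y⁴ + y·z⁴ + z·w⁴ ∈ ℂ[x,y,z,w]. For every nonzero vector (x,y,z,w) ∈ ℂ⁴, all four partial derivatives ∂P/∂x, ∂P/∂y, ∂P/∂z, ∂P/∂w vanish at (x,y,z,w) if and only if z = w = 0 and x⁴ + y⁴ = 0. Consequently, the singular locus of the quintic surface {P = 0} ⊂ ℙ³(ℂ) consists of exactly the four points [η:1:0:0] with η⁴ = −1. -/
import Mathlib


open MvPolynomial

/-- The homogeneous quintic `P = w·x⁴ + w·y⁴ + y·z⁴ + z·w⁴` in variables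
`x = X 0`, `y = X 1`, `z = X 2`, `w = X 3` over `ℂ` (the Delsarte quintic
with Picard number `ρ = 17`). -/
noncomputable def quinticRho17 : MvPolynomial (Fin 4) ℂ :=
  X 3 * X 0 ^ 4 + X 3 * X 1 ^ 4 + X 1 * X 2 ^ 4 + X 2 * X 3 ^ 4

lemma qe0 (v : Fin 4 → ℂ) : eval v (pderiv 0 quinticRho17) = 4 * v 3 * v 0 ^ 3 := by
  simp [quinticRho17, pderiv_X_self, pderiv_X_of_ne]; ring
lemma qe1 (v : Fin 4 → ℂ) : eval v (pderiv 1 quinticRho17) = 4 * v 3 * v 1 ^ 3 + v 2 ^ 4 := by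
  simp [quinticRho17, pderiv_X_self, pderiv_X_of_ne]; ring
lemma qe2 (v : Fin 4 → ℂ) : eval v (pderiv 2 quinticRho17) = 4 * v 1 * v 2 ^ 3 + v 3 ^ 4 := by
  simp [quinticRho17, pderiv_X_self, pderiv_X_of_ne]; ring
lemma qe3 (v : Fin 4 → ℂ) : eval v (pderiv 3 quinticRho17) = v 0 ^ 4 + v 1 ^ 4 + 4 * v 2 * v 3 ^ 3 := by
  simp [quinticRho17, pderiv_X_self, pderiv_X_of_ne]; ring

lemma key (v : Fin 4 → ℂ) (hv : v ≠ 0) :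
    (∀ i : Fin 4, eval v (pderiv i quinticRho17) = 0) ↔
      v 2 = 0 ∧ v 3 = 0 ∧ v 0 ^ 4 + v 1 ^ 4 = 0 := by
  constructor
  · intro h
    have h0 := (qe0 v).symm.trans (h 0)
    have h1 := (qe1 v).symm.trans (h 1)
    have h2 := (qe2 v).symm.trans (h 2)
    have h3 := (qe3 v).symm.trans (h 3)
    set x := v 0; set y := v 1; set z := v 2; set w := v 3
    have hw : w = 0 := by
      by_contra hw
      have hx : x = 0 := by
        have := mul_eq_zero.mp h0
        rcases this with h | h
        · rcases mul_eq_zero.mp h with h | h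
          · norm_num at h
          · exact absurd h hw
        · exact pow_eq_zero_iff (by norm_num) |>.mp h
      have e1 : y ^ 4 = -4 * z * w ^ 3 := by rw [hx] at h3; linear_combination h3
      have e2 : z ^ 4 = -4 * w * y ^ 3 := by linear_combination h1
      have e3 : w ^ 4 = -4 * y * z ^ 3 := by linear_combination h2
      have hprod : y ^ 4 * z ^ 4 * w ^ 4 = (-4 * z * w ^ 3) * (-4 * w * y ^ 3) * (-4 * y * z ^ 3) := by
        rw [e1, e2, e3]
      have h65 : (65 : ℂ) * (y * z * w) ^ 4 = 0 := by linear_combination hprod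
      have hyzw : y * z * w = 0 := by
        have := mul_eq_zero.mp h65
        rcases this with h | h
        · norm_num at h
        · exact pow_eq_zero_iff (by norm_num) |>.mp h
      rcases mul_eq_zero.mp hyzw with h | h
      · rcases mul_eq_zero.mp h with h | h
        · rw [h] at e3; simp at e3; exact hw e3
        · rw [h] at e3; simp at e3; exact hw e3
      · exact hw h
    have hz : z = 0 := by
      rw [hw] at h1
      have : z ^ 4 = 0 := by linear_combination h1
      exact pow_eq_zero_iff (by norm_num) |>.mp this
    refine ⟨hz, hw, ?_⟩
    rw [hz, hw] at h3; linear_combination h3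
  · rintro ⟨hz, hw, hxy⟩ i
    fin_cases i
    · show eval v (pderiv 0 quinticRho17) = 0
      rw [qe0, hw]; ring
    · show eval v (pderiv 1 quinticRho17) = 0
      rw [qe1, hz, hw]; ring
    · show eval v (pderiv 2 quinticRho17) = 0
      rw [qe2, hz, hw]; ring
    · show eval v (pderiv 3 quinticRho17) = 0
      rw [qe3, hz]; linear_combination hxy

/-- For every nonzero `v ∈ ℂ⁴`, all four partial derivatives of `P` vanish at
`v` if and only if `z = w = 0` and `x⁴ + y⁴ = 0`.  Consequently the singular
locus of `{P = 0} ⊂ ℙ³(ℂ)` consists of exactly the four points `[η:1:0:0]`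
with `η⁴ = -1`. -/
theorem quinticRho17_singular_locus :
    (∀ v : Fin 4 → ℂ, v ≠ 0 →
      ((∀ i : Fin 4, eval v (pderiv i quinticRho17) = 0) ↔
        v 2 = 0 ∧ v 3 = 0 ∧ v 0 ^ 4 + v 1 ^ 4 = 0)) ∧
    {p : Projectivization ℂ (Fin 4 → ℂ) |
        ∀ i : Fin 4, eval p.rep (pderiv i quinticRho17) = 0}
      = {p | ∃ η : ℂ, η ^ 4 = -1 ∧
          p = Projectivization.mk ℂ ![η, 1, 0, 0] (by intro h; simpa using congrFun h 1)} := by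
  refine ⟨key, ?_⟩
  ext p
  simp only [Set.mem_setOf_eq]
  rw [key p.rep p.rep_nonzero]
  constructor
  · rintro ⟨hz, hw, hxy⟩
    have h1 : p.rep 1 ≠ 0 := by
      intro h1
      apply p.rep_nonzero
      have hx : p.rep 0 = 0 := by
        have : p.rep 0 ^ 4 = 0 := by rw [h1] at hxy; linear_combination hxy
        exact pow_eq_zero_iff (by norm_num) |>.mp this
      funext i; fin_cases i <;> assumption
    refine ⟨p.rep 0 / p.rep 1, ?_, ?_⟩
    · field_simp
      linear_combination hxy
    · conv_lhs => rw [← p.mk_rep]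
      rw [Projectivization.mk_eq_mk_iff]
      refine ⟨Units.mk0 (p.rep 1) h1, ?_⟩
      funext i
      fin_cases i <;> simp [Units.smul_def, hz, hw] <;> field_simp
  · rintro ⟨η, hη, hp⟩
    have : Projectivization.mk ℂ p.rep p.rep_nonzero =
        Projectivization.mk ℂ ![η, 1, 0, 0] (by intro h; simpa using congrFun h 1) := by
      rw [p.mk_rep]; exact hp
    obtain ⟨a, ha⟩ := (Projectivization.mk_eq_mk_iff _ _ _ _ _).mp this
    have h0 := congrFun ha 0
    have h1 := congrFun ha 1
    have h2 := congrFun ha 2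
    have h3 := congrFun ha 3
    simp [Units.smul_def] at h0 h1 h2 h3
    refine ⟨h2.symm, h3.symm, ?_⟩
    rw [← h0, ← h1]
    linear_combination ((a:ℂ))^4 * hη
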